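/- Among the seven points P₁,…,P₇ given in the explicit coordinate representation (with y-coordinates rational multiples of √2002 as in the previous statement), no three points are collinear. -/

import Mathlib

/-!
If three points of the plane are collinear, the determinant of `q - p` and `r - p` vanishes.
Every `y`-coordinate of the heptagon is a rational multiple of `√2002`, and all denominators
divide `2227 = 17 · 131`. Scaling the axes by `1/2227` and `√2002/2227` multiplies the determinant
by a nonzero constant and turns the seven points into integer points, whose determinants are
checked to be nonzero for every triple by computation.
-/

noncomputable def pt (x y : ℝ) : EuclideanSpace ℝ (Fin 2) := !₂[x, y]

/-- The seven points of the first integral heptagon in general position. -/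
noncomputable def P : Fin 7 → EuclideanSpace ℝ (Fin 2) :=
  ![pt 0 0,
    pt 22270 0,
    pt (26127018 / 2227) ((932064 / 2227) * Real.sqrt 2002),
    pt (245363 / 17) ((3144 / 17) * Real.sqrt 2002),
    pt (17615968 / 2227) ((238464 / 2227) * Real.sqrt 2002),
    pt (56068 / 17) ((3144 / 17) * Real.sqrt 2002),
    pt (19079044 / 2227) (-(54168 / 2227) * Real.sqrt 2002)]

def cross {R : Type*} [CommRing R] (p q r : Fin 2 → R) : R :=
  (q 0 - p 0) * (r 1 - p 1) - (q 1 - p 1) * (r 0 - p 0)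

theorem Collinear.cross_eq_zero {𝕜 : Type*} [RCLike 𝕜] {p q r : EuclideanSpace 𝕜 (Fin 2)}
    (h : Collinear 𝕜 {p, q, r}) : cross p q r = 0 := by
  obtain ⟨v, hv⟩ := (collinear_iff_of_mem (Set.mem_insert p _)).mp h
  obtain ⟨a, rfl⟩ := hv q (by simp)
  obtain ⟨b, rfl⟩ := hv r (by simp)
  simp only [cross, vadd_eq_add, PiLp.add_apply, PiLp.smul_apply, smul_eq_mul]
  ring

theorem cross_mul_left {R : Type*} [CommRing R] (s p q r : Fin 2 → R) :
    cross (s * p) (s * q) (s * r) = s 0 * s 1 * cross p q r := by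
  simp only [cross, Pi.mul_apply]
  ring

@[simp, norm_cast]
theorem cast_cross {R : Type*} [CommRing R] (p q r : Fin 2 → ℤ) :
    ((cross p q r : ℤ) : R) = cross (Int.cast ∘ p) (Int.cast ∘ q) (Int.cast ∘ r) := by
  simp [cross]

noncomputable def pScale : Fin 2 → ℝ := ![1 / 2227, √2002 / 2227]

def pInt : Fin 7 → Fin 2 → ℤ :=
  ![![0, 0], ![49595290, 0], ![26127018, 932064], ![32142553, 411864], ![17615968, 238464],
    ![7344908, 411864], ![19079044, -54168]]

theorem P_eq_toLp_pScale_mul (i : Fin 7) : P i = WithLp.toLp 2 (pScale * (Int.cast ∘ pInt i)) := by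
  fin_cases i <;> ext c <;> fin_cases c <;> simp [P, pInt, pt, pScale] <;> ring

theorem cross_pInt_ne_zero :
    ∀ i j k : Fin 7, i ≠ j → i ≠ k → j ≠ k → cross (pInt i) (pInt j) (pInt k) ≠ 0 := by
  decide

theorem heptagon_no_three_collinear :
    ∀ i j k : Fin 7, i ≠ j → i ≠ k → j ≠ k →
      ¬ Collinear ℝ ({P i, P j, P k} : Set (EuclideanSpace ℝ (Fin 2))) := by
  intro i j k hij hik hjk hcol
  have hcross := hcol.cross_eq_zero
  simp only [P_eq_toLp_pScale_mul, WithLp.ofLp_toLp, cross_mul_left, ← cast_cross] at hcross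
  have hscale : pScale 0 * pScale 1 ≠ 0 := by simp [pScale]
  refine cross_pInt_ne_zero i j k hij hik hjk ?_
  exact_mod_cast (mul_eq_zero.mp hcross).resolve_left hscale
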